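/- Let q be a prime power and d ≤ q. Let PU_1 ⊂ P²(F_{q²}) be the degenerate Hermitian curve defined by x_0^{q+1} + x_1^{q+1} = 0, and let V(F) be a plane curve of degree d over F_{q²}. Then |PU_1 ∩ V(F)(F_{q²})| ≤ dq² + 1, with equality if and only if V(F) is a union of d lines each contained in PU_1. -/

import Mathlib

/-!
Every point of the cone `x₀^{q+1} + x₁^{q+1} = 0` other than `P = [0:0:1]` is `[t:1:s]` with
`t^{q+1} = -1`, so the cone is the union of at most `q + 1` lines `x₀ = t x₁` through `P`, each
with `q²` points besides `P`. Write `F = ∑ⱼ x₂ʲ Fⱼ(x₀, x₁)` with `Fⱼ` of degree `d - j`; then `F`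
vanishes on the line of slope `t` iff `Fⱼ(t, 1) = 0` for all `j`. If this happens for `e` slopes,
every `Fⱼ(t, 1)` with `j > d - e` has more roots than its degree, so it vanishes. Hence `e ≤ d`,
and on each remaining line `F` restricts to a nonzero polynomial of degree `≤ d - e`, giving at
most `e q² + (q + 1 - e)(d - e) + 1` points, which is less than `d q² + 1` unless `e = d`. If
`e = d`, only `F₀` survives and it factors as `u ∏ (x₀ - t x₁)`, so `V(F)` is exactly the union
of those `d` lines.
-/

open Finset
open scoped Polynomial LinearAlgebra.Projectivization

namespace Polynomial

variable {R : Type*} [CommRing R] [IsDomain R]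

lemma eq_C_leadingCoeff_mul_prod_X_sub_C {p : R[X]} {s : Finset R} (hp : p ≠ 0)
    (hdeg : p.natDegree ≤ #s) (hs : ∀ a ∈ s, p.eval a = 0) :
    p = C p.leadingCoeff * ∏ a ∈ s, (X - C a) := by
  have hle : s.val ≤ p.roots :=
    (Multiset.le_iff_subset s.nodup).mpr fun a ha => (mem_roots hp).mpr (hs a ha)
  have hroots : s.val = p.roots :=
    Multiset.eq_of_le_of_card_le hle ((card_roots' p).trans hdeg)
  conv_lhs => rw [← C_leadingCoeff_mul_prod_multiset_X_sub_C
    (le_antisymm (card_roots' p) (hroots ▸ hdeg)), ← hroots]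
  rfl

lemma card_filter_eval_eq_zero_le [Fintype R] [DecidableEq R] {p : R[X]} (hp : p ≠ 0) :
    #{x | p.eval x = 0} ≤ p.natDegree :=
  card_le_degree_of_subset_roots fun x hx => (mem_roots hp).mpr (by simpa using hx)

end Polynomial

namespace MvPolynomial.IsHomogeneous

variable {σ : Type*} [Fintype σ]

lemma sum_eq_of_mem_support {R : Type*} [CommSemiring R] {F : MvPolynomial σ R} {d : ℕ}
    (hF : F.IsHomogeneous d) {m : σ →₀ ℕ} (hm : m ∈ F.support) : ∑ i, m i = d := by
  rw [← Finsupp.degree_eq_sum, Finsupp.degree_eq_weight_one]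
  exact hF (mem_support_iff.mp hm)

lemma eval_smul {R : Type*} [CommSemiring R] {F : MvPolynomial σ R} {d : ℕ}
    (hF : F.IsHomogeneous d) (a : R) (v : σ → R) : eval (a • v) F = a ^ d * eval v F := by
  simp only [eval_eq', mul_sum]
  refine sum_congr rfl fun m hm => ?_
  simp only [Pi.smul_apply, smul_eq_mul, mul_pow, prod_mul_distrib, prod_pow_eq_pow_sum,
    hF.sum_eq_of_mem_support hm]
  ring

lemma eval_rep_mk_eq_zero_iff {K : Type*} [Field K] {F : MvPolynomial σ K} {d : ℕ}
    (hF : F.IsHomogeneous d) {v : σ → K} (hv : v ≠ 0) :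
    eval (Projectivization.mk K v hv).rep F = 0 ↔ eval v F = 0 := by
  obtain ⟨a, ha⟩ := Projectivization.exists_smul_eq_mk_rep K v hv
  rw [← ha, Units.smul_def, hF.eval_smul, mul_eq_zero, or_iff_right (pow_ne_zero _ a.ne_zero)]

end MvPolynomial.IsHomogeneous

namespace DegenerateHermitianCurve

open MvPolynomial Projectivization

variable {K : Type*} [Field K] {F : MvPolynomial (Fin 3) K} {d : ℕ}

lemma add_add_eq_of_mem_support (hF : F.IsHomogeneous d) {m : Fin 3 →₀ ℕ} (hm : m ∈ F.support) :
    m 0 + m 1 + m 2 = d := by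
  simpa [Fin.sum_univ_three] using hF.sum_eq_of_mem_support hm

lemma eq_of_mem_support (hF : F.IsHomogeneous d) {m m' : Fin 3 →₀ ℕ} (hm : m ∈ F.support)
    (hm' : m' ∈ F.support) (h0 : m 0 = m' 0) (h2 : m 2 = m' 2) : m = m' := by
  have := add_add_eq_of_mem_support hF hm
  have := add_add_eq_of_mem_support hF hm'
  ext i
  fin_cases i <;> simp <;> omega

/-- Writing `F = ∑ⱼ x₂ʲ Fⱼ(x₀, x₁)`, this is the dehomogenization `Fⱼ(t, 1)`. -/
noncomputable def lineCoeff (F : MvPolynomial (Fin 3) K) (j : ℕ) : K[X] :=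
  ∑ m ∈ F.support with m 2 = j, Polynomial.monomial (m 0) (F.coeff m)

lemma natDegree_lineCoeff_le (hF : F.IsHomogeneous d) (j : ℕ) :
    (lineCoeff F j).natDegree ≤ d - j := by
  refine Polynomial.natDegree_sum_le_of_forall_le _ _ fun m hm => ?_
  rw [mem_filter] at hm
  have := add_add_eq_of_mem_support hF hm.1
  exact (Polynomial.natDegree_monomial_le _).trans (by omega)

lemma lineCoeff_eq_zero_of_lt (hF : F.IsHomogeneous d) {j : ℕ} (hj : d < j) :
    lineCoeff F j = 0 := by
  refine sum_eq_zero fun m hm => ?_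
  rw [mem_filter] at hm
  have := add_add_eq_of_mem_support hF hm.1
  omega

lemma coeff_lineCoeff (hF : F.IsHomogeneous d) {m : Fin 3 →₀ ℕ} (hm : m ∈ F.support) :
    (lineCoeff F (m 2)).coeff (m 0) = F.coeff m := by
  rw [lineCoeff, Polynomial.finsetSum_coeff, sum_eq_single_of_mem m (by simp [hm])]
  · simp
  · intro m' hm' hne
    rw [mem_filter] at hm'
    rw [Polynomial.coeff_monomial, if_neg]
    exact fun h0 => hne (eq_of_mem_support hF hm'.1 hm h0 hm'.2)

lemma eq_zero_of_forall_lineCoeff_eq_zero (hF : F.IsHomogeneous d)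
    (h : ∀ j, lineCoeff F j = 0) : F = 0 := by
  ext m
  by_cases hm : m ∈ F.support
  · rw [← coeff_lineCoeff hF hm, h, Polynomial.coeff_zero, coeff_zero]
  · simpa using hm

lemma eval_eq_sum_homogenize_lineCoeff (hF : F.IsHomogeneous d) (v : Fin 3 → K) :
    eval v F = ∑ j ∈ range (d + 1),
      eval ![v 0, v 1] ((lineCoeff F j).homogenize (d - j)) * v 2 ^ j := by
  have hmaps : ∀ m ∈ F.support, m 2 ∈ range (d + 1) := fun m hm => by
    have := add_add_eq_of_mem_support hF hm
    rw [mem_range]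
    omega
  rw [eval_eq', ← sum_fiberwise_of_maps_to hmaps]
  refine sum_congr rfl fun j _ => ?_
  rw [lineCoeff, Polynomial.homogenize_finsetSum, map_sum, sum_mul]
  refine sum_congr rfl fun m hm => ?_
  rw [mem_filter] at hm
  have := add_add_eq_of_mem_support hF hm.1
  rw [Polynomial.homogenize_monomial (by omega), eval_monomial,
    Finsupp.prod_fintype _ _ (by simp), Fin.prod_univ_three, Fin.prod_univ_two, ← hm.2]
  simp [show d - m 2 - m 0 = m 1 by omega, mul_assoc]

/-- The restriction `s ↦ F(t, 1, s)` of `F` to the line `x₀ = t x₁`. -/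
noncomputable def restrictLine (F : MvPolynomial (Fin 3) K) (t : K) : K[X] :=
  aeval ![Polynomial.C t, 1, Polynomial.X] F

lemma eval_restrictLine (F : MvPolynomial (Fin 3) K) (t s : K) :
    (restrictLine F t).eval s = eval ![t, 1, s] F := by
  rw [← Polynomial.coe_aeval_eq_eval, restrictLine, ← AlgHom.comp_apply, comp_aeval,
    ← aeval_eq_eval]
  congr 2
  funext i
  fin_cases i <;> simp

lemma coeff_restrictLine (F : MvPolynomial (Fin 3) K) (t : K) (j : ℕ) :
    (restrictLine F t).coeff j = (lineCoeff F j).eval t := by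
  rw [restrictLine, aeval_def, eval₂_eq', Polynomial.finsetSum_coeff, lineCoeff,
    Polynomial.eval_finsetSum, sum_filter]
  refine sum_congr rfl fun m _ => ?_
  simp only [Fin.prod_univ_three, Matrix.cons_val, one_pow, mul_one, ← Polynomial.C_pow,
    Polynomial.algebraMap_eq, ← mul_assoc, ← Polynomial.C_mul, Polynomial.coeff_C_mul_X_pow,
    Polynomial.eval_monomial, eq_comm (a := j)]

lemma restrictLine_eq_zero_iff (t : K) :
    restrictLine F t = 0 ↔ ∀ j, (lineCoeff F j).eval t = 0 := by
  simp [Polynomial.ext_iff, coeff_restrictLine]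

section VanishingLines

variable {E : Finset K}

lemma lineCoeff_eq_zero_of_lt_card_add (hF : F.IsHomogeneous d)
    (hE : ∀ t ∈ E, restrictLine F t = 0) {j : ℕ} (hj : d < #E + j) : lineCoeff F j = 0 := by
  rcases lt_or_ge d j with hdj | hjd
  · exact lineCoeff_eq_zero_of_lt hF hdj
  refine Polynomial.eq_zero_of_natDegree_lt_card_of_eval_eq_zero' _ E (fun t ht => ?_) ?_
  · exact (restrictLine_eq_zero_iff t).mp (hE t ht) j
  · exact (natDegree_lineCoeff_le hF j).trans_lt (by omega)

lemma card_le_of_forall_restrictLine_eq_zero (hF : F.IsHomogeneous d) (hF0 : F ≠ 0)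
    (hE : ∀ t ∈ E, restrictLine F t = 0) : #E ≤ d := by
  by_contra h
  exact hF0 <| eq_zero_of_forall_lineCoeff_eq_zero hF fun j =>
    lineCoeff_eq_zero_of_lt_card_add hF hE (by omega)

lemma natDegree_restrictLine_le (hF : F.IsHomogeneous d) (hE : ∀ t ∈ E, restrictLine F t = 0)
    (t : K) : (restrictLine F t).natDegree ≤ d - #E := by
  rw [Polynomial.natDegree_le_iff_coeff_eq_zero]
  intro j hj
  rw [coeff_restrictLine, lineCoeff_eq_zero_of_lt_card_add hF hE (by omega),
    Polynomial.eval_zero]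

lemma exists_eval_eq_mul_prod (hF : F.IsHomogeneous d) (hF0 : F ≠ 0)
    (hE : ∀ t ∈ E, restrictLine F t = 0) (hEd : #E = d) :
    ∃ u ≠ 0, ∀ v : Fin 3 → K, eval v F = u * ∏ t ∈ E, (v 0 - t * v 1) := by
  have hpos : ∀ j, j ≠ 0 → lineCoeff F j = 0 := fun j hj =>
    lineCoeff_eq_zero_of_lt_card_add hF hE (by omega)
  have h0 : lineCoeff F 0 ≠ 0 := fun h => hF0 <| eq_zero_of_forall_lineCoeff_eq_zero hF fun j => by
    rcases eq_or_ne j 0 with rfl | hj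
    exacts [h, hpos j hj]
  have hfactor := Polynomial.eq_C_leadingCoeff_mul_prod_X_sub_C h0
    ((natDegree_lineCoeff_le hF 0).trans hEd.ge)
    fun t ht => (restrictLine_eq_zero_iff t).mp (hE t ht) 0
  set u := (lineCoeff F 0).leadingCoeff
  refine ⟨u, Polynomial.leadingCoeff_ne_zero.mpr h0, fun v => ?_⟩
  have hprod := Polynomial.homogenize_finsetProd (s := E)
    (p := fun t => Polynomial.X - Polynomial.C t) (n := fun _ => 1)
    fun t _ => Polynomial.natDegree_X_sub_C_le t
  rw [sum_const, smul_eq_mul, mul_one, hEd] at hprod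
  rw [eval_eq_sum_homogenize_lineCoeff hF, sum_eq_single 0 (fun j _ hj => by simp [hpos j hj])
    (by simp), Nat.sub_zero, hfactor, Polynomial.homogenize_C_mul, hprod]
  simp [Polynomial.homogenize_X, Polynomial.homogenize_C]

end VanishingLines

lemma cone_rep_mk_iff (q : ℕ) {v : Fin 3 → K} (hv : v ≠ 0) :
    (mk K v hv).rep 0 ^ (q + 1) + (mk K v hv).rep 1 ^ (q + 1) = 0 ↔
      v 0 ^ (q + 1) + v 1 ^ (q + 1) = 0 := by
  have hG : (X 0 ^ (q + 1) + X 1 ^ (q + 1) : MvPolynomial (Fin 3) K).IsHomogeneous (q + 1) :=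
    (isHomogeneous_X_pow 0 _).add (isHomogeneous_X_pow 1 _)
  simpa using hG.eval_rep_mk_eq_zero_iff hv

lemma eq_zero_of_cone_of_eq_zero {q : ℕ} {v : Fin 3 → K} (hv : v 0 ^ (q + 1) + v 1 ^ (q + 1) = 0)
    (h1 : v 1 = 0) : v 0 = 0 := by
  simpa [h1] using hv

noncomputable def coneChart : Option (K × K) → ℙ K (Fin 3 → K)
  | none => mk K ![0, 0, 1] fun h => by simpa using congrFun h 2
  | some (t, s) => mk K ![t, 1, s] fun h => by simpa using congrFun h 1

lemma coneChart_injective : Function.Injective (coneChart (K := K)) := by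
  rintro (_ | ⟨t, s⟩) (_ | ⟨t', s'⟩) h <;> simp only [coneChart, mk_eq_mk_iff'] at h
  · rfl
  · obtain ⟨a, ha⟩ := h
    have h1 := congrFun ha 1
    have h2 := congrFun ha 2
    simp_all
  · obtain ⟨a, ha⟩ := h
    simpa using congrFun ha 1
  · obtain ⟨a, ha⟩ := h
    have h0 := congrFun ha 0
    have h1 := congrFun ha 1
    have h2 := congrFun ha 2
    simp_all

lemma mem_range_coneChart {q : ℕ} {x : ℙ K (Fin 3 → K)}
    (hx : x.rep 0 ^ (q + 1) + x.rep 1 ^ (q + 1) = 0) : x ∈ Set.range coneChart := by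
  conv_rhs => rw [← x.mk_rep]
  by_cases h1 : x.rep 1 = 0
  · have h0 := eq_zero_of_cone_of_eq_zero hx h1
    have h2 : x.rep 2 ≠ 0 := fun h2 => x.rep_nonzero <| by ext i; fin_cases i <;> simp [*]
    refine ⟨none, (mk_eq_mk_iff' ..).mpr ⟨(x.rep 2)⁻¹, ?_⟩⟩
    ext i; fin_cases i <;> simp [*]
  · refine ⟨some (x.rep 0 / x.rep 1, x.rep 2 / x.rep 1), (mk_eq_mk_iff' ..).mpr ⟨(x.rep 1)⁻¹, ?_⟩⟩
    ext i; fin_cases i <;> simp [*, div_eq_inv_mul]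

def slopeLine (t : K) : Submodule K (Fin 3 → K) :=
  LinearMap.ker (LinearMap.proj 0 - t • LinearMap.proj 1)

lemma mem_slopeLine {t : K} {v : Fin 3 → K} : v ∈ slopeLine t ↔ v 0 = t * v 1 := by
  simp [slopeLine, sub_eq_zero]

lemma submodule_le_slopeLine {t : K} {x : ℙ K (Fin 3 → K)} :
    x.submodule ≤ slopeLine t ↔ x.rep 0 = t * x.rep 1 := by
  rw [submodule_eq, Submodule.span_singleton_le_iff_mem, mem_slopeLine]

lemma slopeLine_injective : Function.Injective (slopeLine (K := K)) := fun t t' h => by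
  have : ![t, 1, 0] ∈ slopeLine t' := h ▸ mem_slopeLine.mpr (by simp)
  simpa [mem_slopeLine] using this

lemma finrank_slopeLine (t : K) : Module.finrank K (slopeLine t) = 2 := by
  let f : (Fin 3 → K) →ₗ[K] K := LinearMap.proj 0 - t • LinearMap.proj 1
  have hf : LinearMap.range f = ⊤ :=
    LinearMap.range_eq_top.mpr fun c => ⟨![c, 0, 0], by simp [f]⟩
  have := LinearMap.finrank_range_add_finrank_ker f
  rw [hf, finrank_top, Module.finrank_self, Module.finrank_fin_fun] at this
  change Module.finrank K (LinearMap.ker f) = 2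
  omega

section Finite

variable [Fintype K] [DecidableEq K]

variable (K) in
def coneSlopes (q : ℕ) : Finset K := {t | t ^ (q + 1) + 1 = 0}

lemma card_coneSlopes_le (q : ℕ) : #(coneSlopes K q) ≤ q + 1 := by
  have h := Polynomial.card_filter_eval_eq_zero_le
    (Polynomial.X_pow_add_C_ne_zero (Nat.succ_pos q) (1 : K))
  rw [Polynomial.natDegree_X_pow_add_C] at h
  simpa [coneSlopes] using h

lemma card_cone_inter_zeroLocus (q : ℕ) (hF : F.IsHomogeneous d) :
    Nat.card {x : ℙ K (Fin 3 → K) //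
        (x.rep 0 ^ (q + 1) + x.rep 1 ^ (q + 1) = 0) ∧ eval x.rep F = 0} =
      (if eval ![0, 0, 1] F = 0 then 1 else 0) +
        ∑ t ∈ coneSlopes K q, #{s | eval ![t, 1, s] F = 0} := by
  set p := fun x : ℙ K (Fin 3 → K) =>
    (x.rep 0 ^ (q + 1) + x.rep 1 ^ (q + 1) = 0) ∧ eval x.rep F = 0
  have hchart := Set.ncard_preimage_of_injective_subset_range coneChart_injective
    (s := {x | p x}) fun x hx => mem_range_coneChart hx.1
  change Nat.card {o // p (coneChart o)} = Nat.card {x // p x} at hchart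
  rw [← hchart, Nat.card_eq_fintype_card, Fintype.card_subtype, card_filter, Fintype.sum_option,
    Fintype.sum_prod_type, coneSlopes, sum_filter]
  congr 1
  · simp [p, coneChart, cone_rep_mk_iff, hF.eval_rep_mk_eq_zero_iff]
  · refine sum_congr rfl fun t _ => ?_
    split_ifs with ht
    · simp [p, coneChart, cone_rep_mk_iff, hF.eval_rep_mk_eq_zero_iff, ht]
    · simp [p, coneChart, cone_rep_mk_iff, ht]

lemma exists_eq_slopeLine {q : ℕ} {W : Submodule K (Fin 3 → K)} (hW : Module.finrank K W = 2)
    (hcone : ∀ w ∈ W, w 0 ^ (q + 1) + w 1 ^ (q + 1) = 0) :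
    ∃ t ∈ coneSlopes K q, W = slopeLine t := by
  obtain ⟨w, hwW, hw1⟩ : ∃ w ∈ W, w 1 ≠ 0 := by
    by_contra! h
    have hle : W ≤ K ∙ ![0, 0, 1] := fun w hw => Submodule.mem_span_singleton.mpr ⟨w 2, by
      have h0 := eq_zero_of_cone_of_eq_zero (hcone w hw) (h w hw)
      ext i; fin_cases i <;> simp [h w hw, h0]⟩
    have := Submodule.finrank_mono hle
    rw [hW, finrank_span_singleton fun h => by simpa using congrFun h 2] at this
    omega
  set w' := (w 1)⁻¹ • w
  have hw' : w' ∈ W := W.smul_mem _ hwW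
  have hw'1 : w' 1 = 1 := by simp [w', hw1]
  refine ⟨w' 0, by simpa [coneSlopes, hw'1] using hcone w' hw',
    Submodule.eq_of_le_of_finrank_le (fun v hv => ?_) (by rw [finrank_slopeLine, hW])⟩
  have hu : v - v 1 • w' ∈ W := W.sub_mem hv (W.smul_mem _ hw')
  have := eq_zero_of_cone_of_eq_zero (hcone _ hu) (by simp [hw'1])
  rw [mem_slopeLine]
  simp only [Pi.sub_apply, Pi.smul_apply, smul_eq_mul] at this
  linear_combination this

lemma exists_slopeLines_of_zeroLocus {q : ℕ} {S : Finset K} (hS : S ⊆ coneSlopes K q)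
    (hzero : ∀ v : Fin 3 → K, v ≠ 0 → (eval v F = 0 ↔ ∃ t ∈ S, v 0 = t * v 1)) :
    ∃ L : Finset (Submodule K (Fin 3 → K)), L.card = #S ∧
      (∀ W ∈ L, Module.finrank K W = 2 ∧
        ∀ x : ℙ K (Fin 3 → K), x.submodule ≤ W → x.rep 0 ^ (q + 1) + x.rep 1 ^ (q + 1) = 0) ∧
      ∀ x : ℙ K (Fin 3 → K), eval x.rep F = 0 ↔ ∃ W ∈ L, x.submodule ≤ W := by
  classical
  refine ⟨S.image slopeLine, card_image_of_injective _ slopeLine_injective, ?_, fun x => ?_⟩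
  · simp only [mem_image, forall_exists_index, and_imp]
    rintro _ t ht rfl
    refine ⟨finrank_slopeLine t, fun x hx => ?_⟩
    have ht' : t ^ (q + 1) + 1 = 0 := by simpa [coneSlopes] using hS ht
    rw [submodule_le_slopeLine.mp hx]
    linear_combination x.rep 1 ^ (q + 1) * ht'
  · simp [submodule_le_slopeLine, hzero x.rep x.rep_nonzero]

lemma exists_zeroLocus_of_slopeLines {q : ℕ} (hF : F.IsHomogeneous d)
    {L : Finset (Submodule K (Fin 3 → K))}
    (hL : ∀ W ∈ L, Module.finrank K W = 2 ∧
      ∀ x : ℙ K (Fin 3 → K), x.submodule ≤ W → x.rep 0 ^ (q + 1) + x.rep 1 ^ (q + 1) = 0)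
    (hLF : ∀ x : ℙ K (Fin 3 → K), eval x.rep F = 0 ↔ ∃ W ∈ L, x.submodule ≤ W) :
    ∃ S ⊆ coneSlopes K q, #S = L.card ∧
      ∀ v : Fin 3 → K, v ≠ 0 → (eval v F = 0 ↔ ∃ t ∈ S, v 0 = t * v 1) := by
  have hmk {v : Fin 3 → K} (hv : v ≠ 0) (W : Submodule K (Fin 3 → K)) :
      (mk K v hv).submodule ≤ W ↔ v ∈ W := by
    rw [submodule_mk, Submodule.span_singleton_le_iff_mem]
  have hslope : ∀ W ∈ L, ∃ t ∈ coneSlopes K q, W = slopeLine t := fun W hW =>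
    exists_eq_slopeLine (hL W hW).1 fun w hw => by
      rcases eq_or_ne w 0 with rfl | hw0
      · simp
      · exact (cone_rep_mk_iff q hw0).mp ((hL W hW).2 _ ((hmk hw0 W).mpr hw))
  choose! τ hτT hτW using hslope
  refine ⟨L.image τ, fun t ht => ?_, card_image_of_injOn fun W hW W' hW' h => ?_, fun v hv => ?_⟩
  · obtain ⟨W, hW, rfl⟩ := mem_image.mp ht
    exact hτT W hW
  · rw [hτW W hW, hτW W' hW', h]
  · rw [← hF.eval_rep_mk_eq_zero_iff hv, hLF, exists_mem_image]
    refine exists_congr fun W => and_congr_right fun hW => ?_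
    rw [hmk, ← mem_slopeLine, ← hτW W hW]

lemma exists_slopeLines_iff {q : ℕ} (hF : F.IsHomogeneous d) :
    (∃ L : Finset (Submodule K (Fin 3 → K)), L.card = d ∧
      (∀ W ∈ L, Module.finrank K W = 2 ∧
        ∀ x : ℙ K (Fin 3 → K), x.submodule ≤ W → x.rep 0 ^ (q + 1) + x.rep 1 ^ (q + 1) = 0) ∧
      ∀ x : ℙ K (Fin 3 → K), eval x.rep F = 0 ↔ ∃ W ∈ L, x.submodule ≤ W) ↔
    ∃ S ⊆ coneSlopes K q, #S = d ∧
      ∀ v : Fin 3 → K, v ≠ 0 → (eval v F = 0 ↔ ∃ t ∈ S, v 0 = t * v 1) := by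
  constructor
  · rintro ⟨L, rfl, hL, hLF⟩
    exact exists_zeroLocus_of_slopeLines hF hL hLF
  · rintro ⟨S, hST, rfl, hzero⟩
    exact exists_slopeLines_of_zeroLocus hST hzero

lemma card_cone_inter_zeroLocus_of_slopeLines {q : ℕ} (hK : Fintype.card K = q ^ 2)
    (hF : F.IsHomogeneous d) {S : Finset K} (hS : S ⊆ coneSlopes K q) (hSne : S.Nonempty)
    (hzero : ∀ v : Fin 3 → K, v ≠ 0 → (eval v F = 0 ↔ ∃ t ∈ S, v 0 = t * v 1)) :
    Nat.card {x : ℙ K (Fin 3 → K) //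
        (x.rep 0 ^ (q + 1) + x.rep 1 ^ (q + 1) = 0) ∧ eval x.rep F = 0} = #S * q ^ 2 + 1 := by
  have hrow (t : K) : #{s | eval ![t, 1, s] F = 0} = if t ∈ S then q ^ 2 else 0 := by
    have hts (s : K) : eval ![t, 1, s] F = 0 ↔ t ∈ S := by
      simpa using hzero ![t, 1, s] fun h => by simpa using congrFun h 1
    simp only [hts]
    split_ifs with h <;> simp [h, hK]
  obtain ⟨t, ht⟩ := hSne
  have hP : eval ![0, 0, 1] F = 0 :=
    (hzero _ fun h => by simpa using congrFun h 2).mpr ⟨t, ht, by simp⟩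
  rw [card_cone_inter_zeroLocus q hF, if_pos hP, sum_congr rfl fun t _ => hrow t, sum_ite_mem,
    inter_eq_right.mpr hS, sum_const, smul_eq_mul, add_comm]

variable (F) in
noncomputable def containedSlopes (q : ℕ) : Finset K :=
  {t ∈ coneSlopes K q | restrictLine F t = 0}

lemma card_cone_inter_zeroLocus_le {q : ℕ} (hK : Fintype.card K = q ^ 2)
    (hF : F.IsHomogeneous d) :
    Nat.card {x : ℙ K (Fin 3 → K) //
        (x.rep 0 ^ (q + 1) + x.rep 1 ^ (q + 1) = 0) ∧ eval x.rep F = 0} ≤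
      #(containedSlopes F q) * q ^ 2 +
        (q + 1 - #(containedSlopes F q)) * (d - #(containedSlopes F q)) + 1 := by
  set E := containedSlopes F q
  have hE : ∀ t ∈ E, restrictLine F t = 0 := fun t ht => (mem_filter.mp ht).2
  have hrow (t : K) : #{s | eval ![t, 1, s] F = 0} = #{s | (restrictLine F t).eval s = 0} := by
    simp [eval_restrictLine]
  rw [card_cone_inter_zeroLocus q hF, ← sum_filter_add_sum_filter_not _ (restrictLine F · = 0)]
  have hcontained : ∑ t ∈ E, #{s | eval ![t, 1, s] F = 0} = #E * q ^ 2 := by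
    rw [sum_congr rfl fun t ht => by rw [hrow, hE t ht], sum_const, smul_eq_mul]
    simp [hK]
  have hrest : ∑ t ∈ coneSlopes K q with ¬restrictLine F t = 0, #{s | eval ![t, 1, s] F = 0} ≤
      (q + 1 - #E) * (d - #E) := by
    refine (sum_le_card_nsmul _ _ _ fun t ht => ?_).trans (Nat.mul_le_mul_right _ ?_)
    · rw [hrow]
      exact (Polynomial.card_filter_eval_eq_zero_le (mem_filter.mp ht).2).trans
        (natDegree_restrictLine_le hF hE t)
    · have := card_filter_add_card_filter_not (s := coneSlopes K q) (restrictLine F · = 0)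
      have := card_coneSlopes_le (K := K) q
      change #E + _ = _ at *
      omega
  change (if _ then 1 else 0) + (∑ t ∈ E, _ + _) ≤ _
  split_ifs <;> omega

end Finite

lemma mul_sq_add_mul_add_one_le {q d e : ℕ} (hq : 2 ≤ q) (he : e < d) :
    e * q ^ 2 + (q + 1 - e) * (d - e) + 1 ≤ d * q ^ 2 := by
  obtain ⟨a, rfl⟩ := Nat.exists_eq_add_of_lt he
  rw [show e + a + 1 - e = a + 1 by omega]
  have h1 : (q + 1 - e) * (a + 1) ≤ (q + 1) * (a + 1) := Nat.mul_le_mul_right _ (Nat.sub_le _ _)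
  have h2 : (a + 1) * (q + 2) ≤ (a + 1) * q ^ 2 := Nat.mul_le_mul_left _ (by nlinarith)
  nlinarith

end DegenerateHermitianCurve

open DegenerateHermitianCurve in
theorem stmt10_general (q d : ℕ) (hd : 1 ≤ d)
    (K : Type) [Field K] [Fintype K] (hK : Fintype.card K = q ^ 2)
    (F : MvPolynomial (Fin 3) K) (hF : F ≠ 0) (hFd : F.IsHomogeneous d) :
    Nat.card {x : Projectivization K (Fin 3 → K) //
        (x.rep 0 ^ (q + 1) + x.rep 1 ^ (q + 1) = 0) ∧ MvPolynomial.eval x.rep F = 0}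
      ≤ d * q ^ 2 + 1 ∧
    (Nat.card {x : Projectivization K (Fin 3 → K) //
        (x.rep 0 ^ (q + 1) + x.rep 1 ^ (q + 1) = 0) ∧ MvPolynomial.eval x.rep F = 0}
        = d * q ^ 2 + 1 ↔
      ∃ L : Finset (Submodule K (Fin 3 → K)), L.card = d ∧
        (∀ W ∈ L, Module.finrank K W = 2 ∧
          ∀ x : Projectivization K (Fin 3 → K), x.submodule ≤ W →
            x.rep 0 ^ (q + 1) + x.rep 1 ^ (q + 1) = 0) ∧
        ∀ x : Projectivization K (Fin 3 → K),
          MvPolynomial.eval x.rep F = 0 ↔ ∃ W ∈ L, x.submodule ≤ W) := by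
  classical
  have hq : 2 ≤ q := by
    have := Fintype.one_lt_card (α := K)
    rw [hK] at this
    nlinarith
  set E := containedSlopes F q
  have hET : E ⊆ coneSlopes K q := filter_subset _ _
  have hE : ∀ t ∈ E, restrictLine F t = 0 := fun t ht => (mem_filter.mp ht).2
  rw [exists_slopeLines_iff hFd]
  rcases (card_le_of_forall_restrictLine_eq_zero hFd hF hE).eq_or_lt with hEd | hEd
  · obtain ⟨u, hu, hprod⟩ := exists_eval_eq_mul_prod hFd hF hE hEd
    have hzero (v : Fin 3 → K) (_ : v ≠ 0) :
        MvPolynomial.eval v F = 0 ↔ ∃ t ∈ E, v 0 = t * v 1 := by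
      simp [hprod, hu, prod_eq_zero_iff, sub_eq_zero]
    have hN := card_cone_inter_zeroLocus_of_slopeLines hK hFd hET (card_pos.mp (by omega)) hzero
    rw [hEd] at hN
    exact ⟨hN.le, iff_of_true hN ⟨E, hET, hEd, hzero⟩⟩
  · have hN := (card_cone_inter_zeroLocus_le hK hFd).trans (mul_sq_add_mul_add_one_le hq hEd)
    refine ⟨by omega, iff_of_false (by omega) fun ⟨S, hST, hS, hzero⟩ => ?_⟩
    have := card_cone_inter_zeroLocus_of_slopeLines hK hFd hST (card_pos.mp (by omega)) hzero
    rw [hS] at this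
    omega

/-- For the degenerate Hermitian curve `PU_1 = V(x_0^{q+1} + x_1^{q+1}) ⊆ ℙ²(F_{q²})`
and a plane curve `V(F)` of degree `d ≤ q`: `|PU_1 ∩ V(F)(F_{q²})| ≤ dq² + 1`, with
equality iff `V(F)` is a union of `d` lines each contained in `PU_1`. -/
theorem stmt10 (q d : ℕ) (hq : IsPrimePow q) (hd : 1 ≤ d) (hdq : d ≤ q)
    (K : Type) [Field K] [Fintype K] (hK : Fintype.card K = q ^ 2)
    (F : MvPolynomial (Fin 3) K) (hF : F ≠ 0) (hFd : F.IsHomogeneous d) :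
    Nat.card {x : Projectivization K (Fin 3 → K) //
        (x.rep 0 ^ (q + 1) + x.rep 1 ^ (q + 1) = 0) ∧ MvPolynomial.eval x.rep F = 0}
      ≤ d * q ^ 2 + 1 ∧
    (Nat.card {x : Projectivization K (Fin 3 → K) //
        (x.rep 0 ^ (q + 1) + x.rep 1 ^ (q + 1) = 0) ∧ MvPolynomial.eval x.rep F = 0}
        = d * q ^ 2 + 1 ↔
      ∃ L : Finset (Submodule K (Fin 3 → K)), L.card = d ∧
        (∀ W ∈ L, Module.finrank K W = 2 ∧
          ∀ x : Projectivization K (Fin 3 → K), x.submodule ≤ W →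
            x.rep 0 ^ (q + 1) + x.rep 1 ^ (q + 1) = 0) ∧
        ∀ x : Projectivization K (Fin 3 → K),
          MvPolynomial.eval x.rep F = 0 ↔ ∃ W ∈ L, x.submodule ≤ W) :=
  stmt10_general q d hd K hK F hF hFd
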